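/- arXiv:2503.21174 — 7 statements merged into one kernel-verified Lean document; each statement's English description precedes it below -/
import Mathlib

section
/- Let G be a connected finite simple graph with at least two vertices. Then λ₂(G) < max_{v ∈ V} ρ(G−v) ≤ max_{e ∈ E} ρ(G−e), where λ₂(G) denotes the second-largest eigenvalue of the adjacency matrix of G (eigenvalues listed in nonincreasing order with multiplicity). -/
open Matrix Finset
open scoped Classical

noncomputable section

/-- `μ` is an eigenvalue of the real matrix `A`. -/
def IsEigenval {n : Type*} [Fintype n] (A : Matrix n n ℝ) (μ : ℝ) : Prop :=
  ∃ x : n → ℝ, x ≠ 0 ∧ A.mulVec x = μ • x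

/-- The spectral radius of a real symmetric matrix:
the largest modulus of an eigenvalue. -/
def specRad {n : Type*} [Fintype n] (A : Matrix n n ℝ) : ℝ :=
  sSup {r : ℝ | ∃ μ : ℝ, IsEigenval A μ ∧ r = |μ|}

/-- The spectral radius of a finite simple graph. -/
def grho {V : Type*} [Fintype V] [DecidableEq V] (G : SimpleGraph V) : ℝ :=
  letI := Classical.decRel G.Adj
  specRad (G.adjMatrix ℝ)

/-- max over edges of spectral radius of the edge-deleted graph -/
def rhoE {V : Type*} [Fintype V] [DecidableEq V] (G : SimpleGraph V) : ℝ :=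
  sSup {r : ℝ | ∃ e ∈ G.edgeSet, r = grho (G.deleteEdges {e})}

/-- Eigenpair of the k-power hypergraph G^(k). -/
def IsPowerEigenpair {V : Type*} [Fintype V] [DecidableEq V] (G : SimpleGraph V) (k : ℕ)
    (lam : ℂ) (x : (V ⊕ (G.edgeSet × Fin (k - 2))) → ℂ) : Prop :=
  x ≠ 0 ∧
    (∀ i : V, lam * x (Sum.inl i) ^ (k - 1) =
      ∑ j : V, if h : G.Adj i j then
        x (Sum.inl j) * ∏ t : Fin (k - 2), x (Sum.inr (⟨s(i, j), (G.mem_edgeSet).mpr h⟩, t))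
      else 0) ∧
    ∀ (i j : V) (h : G.Adj i j) (t : Fin (k - 2)),
      lam * x (Sum.inr (⟨s(i, j), (G.mem_edgeSet).mpr h⟩, t)) ^ (k - 1) =
        x (Sum.inl i) * x (Sum.inl j) *
          ∏ u ∈ Finset.univ.erase t, x (Sum.inr (⟨s(i, j), (G.mem_edgeSet).mpr h⟩, u))

/-- λ is an eigenvalue of G^(k). -/
def IsPowerEigenvalue {V : Type*} [Fintype V] [DecidableEq V] (G : SimpleGraph V) (k : ℕ)
    (lam : ℂ) : Prop :=
  ∃ x, IsPowerEigenpair G k lam x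

/-- The adjacency matrix of a signed graph, sign function `π : G.edgeSet → ℤˣ`. -/
def signedAdj {V : Type*} [Fintype V] [DecidableEq V] (G : SimpleGraph V)
    (π : G.edgeSet → ℤˣ) : Matrix V V ℝ :=
  Matrix.of fun i j => if h : G.Adj i j then ((π ⟨s(i, j), (G.mem_edgeSet).mpr h⟩ : ℤ) : ℝ) else 0

/-- Switching-equivalence of matrices. -/
def SwitchEquiv {V : Type*} [Fintype V] [DecidableEq V] (A B : Matrix V V ℝ) : Prop :=
  ∃ d : V → ℝ, (∀ i, d i = 1 ∨ d i = -1) ∧ B = Matrix.diagonal d * A * Matrix.diagonal d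

/-- A signed graph is balanced if it is switching equivalent to the all-`+1` signing. -/
def IsBalanced {V : Type*} [Fintype V] [DecidableEq V] (G : SimpleGraph V)
    (π : G.edgeSet → ℤˣ) : Prop :=
  SwitchEquiv (signedAdj G π) (signedAdj G fun _ => 1)

def IsBipartite {V : Type*} (G : SimpleGraph V) : Prop :=
  ∃ c : V → Bool, ∀ ⦃i j⦄, G.Adj i j → c i ≠ c j

end

lemma adjMatrix_isHermitian {V : Type*} [Fintype V] [DecidableEq V] (G : SimpleGraph V)
    [DecidableRel G.Adj] : (SimpleGraph.adjMatrix ℝ G).IsHermitian := by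
  rw [Matrix.IsHermitian, conjTranspose_eq_transpose_of_trivial]
  exact G.isSymm_adjMatrix

/-- The adjacency eigenvalues of `G`, sorted in nondecreasing order (with multiplicity). -/
noncomputable def sortedEigs {V : Type*} [Fintype V] [DecidableEq V] (G : SimpleGraph V) :
    List ℝ :=
  letI := Classical.decRel G.Adj
  Multiset.sort (Finset.univ.val.map (adjMatrix_isHermitian G).eigenvalues) (· ≤ ·)

/-- The second-largest adjacency eigenvalue of `G`, counted with multiplicity. -/
noncomputable def lambdaTwo {V : Type*} [Fintype V] [DecidableEq V] (G : SimpleGraph V) : ℝ :=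
  (sortedEigs G).getD (Fintype.card V - 2) 0


/-!
Let `λ₁ ≥ λ₂` be the two largest adjacency eigenvalues of `G`, with orthonormal eigenvectors `p`
and `q`, and for a vertex `v` put `x = p v • q - q v • p`, which vanishes at `v`.

Perron–Frobenius: a top eigenvector `y` has no zero entry, since `|y|` still attains the Rayleigh
bound `λ₁`, hence is a nonnegative eigenvector, and a zero of a nonnegative eigenvector spreads
along edges. So `λ₁` is simple, for otherwise `x` would be a top eigenvector with a zero.

Now choose `v` with `q v ≠ 0`. As `x` vanishes at `v`, its Rayleigh quotient is at most `ρ(G - v)`,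
and it equals `(p v ^ 2 λ₂ + q v ^ 2 λ₁) / (p v ^ 2 + q v ^ 2) > λ₂`.

For the second inequality, `G - v` is an induced subgraph of `G - vu` for a neighbour `u` of `v`,
and the spectral radius of a nonnegative symmetric matrix bounds that of each principal submatrix:
if `A' y = μ y`, then `|μ| ‖y‖² = |yᵀ A' y| ≤ |y|ᵀ A' |y|`.
-/

namespace Matrix

section Submatrix

variable {R m n : Type*} [CommSemiring R] [Fintype m] [Fintype n] {f : m → n}

theorem comp_dotProduct_comp_of_injective (hf : Function.Injective f) {u : n → R}
    (hu : ∀ i ∉ Set.range f, u i = 0) (w : n → R) : (u ∘ f) ⬝ᵥ (w ∘ f) = u ⬝ᵥ w :=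
  Fintype.sum_of_injective f hf _ _ (fun i hi => by simp [hu i hi]) fun _ => rfl

theorem submatrix_mulVec_comp_of_injective (hf : Function.Injective f) (B : Matrix n n R)
    {x : n → R} (hx : ∀ i ∉ Set.range f, x i = 0) :
    B.submatrix f f *ᵥ (x ∘ f) = (B *ᵥ x) ∘ f := by
  ext i
  simp only [mulVec, Function.comp_apply]
  rw [dotProduct_comm, dotProduct_comm _ x, ← comp_dotProduct_comp_of_injective hf hx]
  rfl

theorem comp_dotProduct_submatrix_mulVec_comp (hf : Function.Injective f) (B : Matrix n n R)
    {x : n → R} (hx : ∀ i ∉ Set.range f, x i = 0) :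
    (x ∘ f) ⬝ᵥ B.submatrix f f *ᵥ (x ∘ f) = x ⬝ᵥ B *ᵥ x := by
  rw [submatrix_mulVec_comp_of_injective hf B hx, comp_dotProduct_comp_of_injective hf hx]

end Submatrix

section Quadratic

variable {n : Type*} [Fintype n] {A : Matrix n n ℝ}

theorem abs_dotProduct_abs (x : n → ℝ) : |x| ⬝ᵥ |x| = x ⬝ᵥ x :=
  Finset.sum_congr rfl fun i _ => abs_mul_abs_self (x i)

theorem abs_dotProduct_mulVec_le (hA : ∀ i j, 0 ≤ A i j) (x : n → ℝ) :
    |x ⬝ᵥ A *ᵥ x| ≤ |x| ⬝ᵥ A *ᵥ |x| := by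
  simp only [dotProduct, mulVec, Finset.mul_sum]
  refine (Finset.abs_sum_le_sum_abs _ _).trans (Finset.sum_le_sum fun i _ => ?_)
  refine (Finset.abs_sum_le_sum_abs _ _).trans (Finset.sum_le_sum fun j _ => ?_)
  simp [abs_mul, abs_of_nonneg (hA i j)]

theorem dotProduct_mulVec_smul_add_smul {p q : n → ℝ} {a b : ℝ} (hp : A *ᵥ p = a • p)
    (hq : A *ᵥ q = b • q) (hpq : p ⬝ᵥ q = 0) (s t : ℝ) :
    (s • p + t • q) ⬝ᵥ A *ᵥ (s • p + t • q) = s ^ 2 * a * (p ⬝ᵥ p) + t ^ 2 * b * (q ⬝ᵥ q) := by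
  simp only [mulVec_add, mulVec_smul, hp, hq, add_dotProduct, dotProduct_add, smul_dotProduct,
    dotProduct_smul, dotProduct_comm q p, hpq, smul_eq_mul]
  ring

theorem dotProduct_smul_add_smul [DecidableEq n] {p q : n → ℝ} (hpq : p ⬝ᵥ q = 0) (s t : ℝ) :
    (s • p + t • q) ⬝ᵥ (s • p + t • q) = s ^ 2 * (p ⬝ᵥ p) + t ^ 2 * (q ⬝ᵥ q) := by
  simpa using dotProduct_mulVec_smul_add_smul (A := 1) (a := 1) (b := 1) (by simp) (by simp) hpq s t

end Quadratic

section PosSemidef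

variable {n : Type*} [Fintype n] [DecidableEq n] {A : Matrix n n ℝ} {c : ℝ}

theorem PosSemidef.dotProduct_mulVec_le (h : (c • 1 - A).PosSemidef) (x : n → ℝ) :
    x ⬝ᵥ A *ᵥ x ≤ c * (x ⬝ᵥ x) := by
  have := h.dotProduct_mulVec_nonneg x
  simp only [star_trivial, sub_mulVec, smul_mulVec, one_mulVec, dotProduct_sub,
    dotProduct_smul, smul_eq_mul] at this
  linarith

theorem PosSemidef.mulVec_eq_smul_of_dotProduct_mulVec_eq (h : (c • 1 - A).PosSemidef)
    {x : n → ℝ} (hx : x ⬝ᵥ A *ᵥ x = c * (x ⬝ᵥ x)) : A *ᵥ x = c • x := by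
  have := (h.dotProduct_mulVec_zero_iff x).1 (by
    simp only [star_trivial, sub_mulVec, smul_mulVec, one_mulVec, dotProduct_sub,
      dotProduct_smul, smul_eq_mul, hx, sub_self])
  rw [sub_mulVec, smul_mulVec, one_mulVec, sub_eq_zero] at this
  exact this.symm

end PosSemidef

section Hermitian

variable {n : Type*} [Fintype n] [DecidableEq n] {A : Matrix n n ℝ}

theorem isEigenval_iff_mem_spectrum {μ : ℝ} : IsEigenval A μ ↔ μ ∈ spectrum ℝ A := by
  rw [← spectrum_toLin', ← Module.End.hasEigenvalue_iff_mem_spectrum,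
    Module.End.hasEigenvalue_iff, Submodule.ne_bot_iff, IsEigenval]
  simp only [Module.End.mem_eigenspace_iff, toLin'_apply]
  exact exists_congr fun x => and_comm

namespace IsHermitian

variable (hA : A.IsHermitian)
include hA

theorem specRad_eq_iSup : specRad A = ⨆ i, |hA.eigenvalues i| := by
  rw [specRad, iSup]
  congr 1
  ext r
  simp [isEigenval_iff_mem_spectrum, hA.spectrum_real_eq_range_eigenvalues, eq_comm]

theorem abs_eigenvalues_le_specRad (i : n) : |hA.eigenvalues i| ≤ specRad A :=
  hA.specRad_eq_iSup ▸ le_ciSup (f := fun i => |hA.eigenvalues i|) (Set.finite_range _).bddAbove i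

theorem exists_abs_eigenvalues_eq_specRad [Nonempty n] : ∃ i, |hA.eigenvalues i| = specRad A :=
  hA.specRad_eq_iSup ▸ exists_eq_ciSup_of_finite

theorem specRad_nonneg : 0 ≤ specRad A :=
  hA.specRad_eq_iSup ▸ Real.iSup_nonneg fun _ => abs_nonneg _

theorem posSemidef_smul_one_sub {c : ℝ} (hc : ∀ i, hA.eigenvalues i ≤ c) :
    (c • 1 - A).PosSemidef := by
  have h : c • 1 - A = hA.eigenvectorUnitary * diagonal (fun i => c - hA.eigenvalues i) *
      star (hA.eigenvectorUnitary : Matrix n n ℝ) := by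
    conv_lhs => rw [hA.spectral_theorem]
    simp [Unitary.conjStarAlgAut_apply, ← diagonal_sub, Matrix.mul_sub, Matrix.sub_mul,
      ← smul_one_eq_diagonal]
  rw [h]
  simpa [Unitary.isUnit_coe.posSemidef_star_right_conjugate_iff, posSemidef_diagonal_iff,
    Pi.le_def] using hc

theorem dotProduct_mulVec_le_specRad (x : n → ℝ) : x ⬝ᵥ A *ᵥ x ≤ specRad A * (x ⬝ᵥ x) :=
  (hA.posSemidef_smul_one_sub fun i =>
    (le_abs_self _).trans (hA.abs_eigenvalues_le_specRad i)).dotProduct_mulVec_le x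

theorem eigenvectorBasis_dotProduct (i j : n) :
    ⇑(hA.eigenvectorBasis i) ⬝ᵥ ⇑(hA.eigenvectorBasis j) = if i = j then 1 else 0 := by
  rw [← hA.eigenvectorBasis.inner_eq_ite, EuclideanSpace.inner_eq_star_dotProduct, star_trivial,
    dotProduct_comm]

theorem eigenvalues_equivOfCardEq (k : Fin (Fintype.card n)) :
    hA.eigenvalues (Fintype.equivOfCardEq (Fintype.card_fin _) k) = hA.eigenvalues₀ k := by
  simp [IsHermitian.eigenvalues]

theorem sort_eigenvalues :
    Multiset.sort (Finset.univ.val.map hA.eigenvalues) (· ≤ ·) =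
      (List.ofFn hA.eigenvalues₀).reverse := by
  refine List.Perm.eq_reverse_of_sortedLE_of_sortedGE ?_ (Multiset.pairwise_sort _ _).sortedLE
    hA.eigenvalues₀_antitone.sortedGE_ofFn
  rw [← Multiset.coe_eq_coe, Multiset.sort_eq, ← Fin.univ_val_map,
    ← Multiset.map_univ_val_equiv (Fintype.equivOfCardEq (Fintype.card_fin _)), Multiset.map_map]
  simp only [Function.comp_def, hA.eigenvalues_equivOfCardEq]

theorem getD_sort_eigenvalues {k : ℕ} (hk : k < Fintype.card n) :
    (Multiset.sort (Finset.univ.val.map hA.eigenvalues) (· ≤ ·)).getD (Fintype.card n - 1 - k) 0 =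
      hA.eigenvalues₀ ⟨k, hk⟩ := by
  rw [hA.sort_eigenvalues, List.getD_eq_getElem _ _ (by simp; omega), List.getElem_reverse]
  simp only [List.getElem_ofFn, List.length_ofFn]
  congr 2
  omega

theorem eigenvalues_le_eigenvalues₀_zero (h : 0 < Fintype.card n) (i : n) :
    hA.eigenvalues i ≤ hA.eigenvalues₀ ⟨0, h⟩ := by
  rw [← (Fintype.equivOfCardEq (Fintype.card_fin _)).apply_symm_apply i,
    hA.eigenvalues_equivOfCardEq]
  exact hA.eigenvalues₀_antitone (Nat.zero_le _)

theorem exists_eigenvectors_eigenvalues₀_zero_one (h : 1 < Fintype.card n) :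
    ∃ p q : n → ℝ, A *ᵥ p = hA.eigenvalues₀ ⟨0, by omega⟩ • p ∧
      A *ᵥ q = hA.eigenvalues₀ ⟨1, h⟩ • q ∧ p ⬝ᵥ p = 1 ∧ q ⬝ᵥ q = 1 ∧ p ⬝ᵥ q = 0 := by
  set e := Fintype.equivOfCardEq (α := Fin (Fintype.card n)) (Fintype.card_fin _)
  refine ⟨hA.eigenvectorBasis (e ⟨0, by omega⟩), hA.eigenvectorBasis (e ⟨1, h⟩),
    ?_, ?_, ?_, ?_, ?_⟩
  · rw [hA.mulVec_eigenvectorBasis, hA.eigenvalues_equivOfCardEq]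
  · rw [hA.mulVec_eigenvectorBasis, hA.eigenvalues_equivOfCardEq]
  all_goals simp [hA.eigenvectorBasis_dotProduct, Fin.ext_iff]

end IsHermitian

theorem specRad_submatrix_le {m : Type*} [Fintype m] [DecidableEq m] (hA : A.IsHermitian)
    (hA₀ : ∀ i j, 0 ≤ A i j) {f : m → n} (hf : Function.Injective f) :
    specRad (A.submatrix f f) ≤ specRad A := by
  have hB := hA.submatrix f
  cases isEmpty_or_nonempty m
  · simpa [hB.specRad_eq_iSup] using hA.specRad_nonneg
  obtain ⟨i, hi⟩ := hB.exists_abs_eigenvalues_eq_specRad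
  set y := ⇑(hB.eigenvectorBasis i)
  have hy : y ⬝ᵥ y = 1 := by simp [y, hB.eigenvectorBasis_dotProduct]
  set z := Function.extend f |y| 0
  have hz : ∀ k ∉ Set.range f, z k = 0 := fun k hk => by
    simp [z, Function.extend_apply' _ _ _ fun ⟨a, ha⟩ => hk ⟨a, ha⟩]
  have hzf : z ∘ f = |y| := funext fun a => hf.extend_apply _ _ a
  calc specRad (A.submatrix f f) = |y ⬝ᵥ A.submatrix f f *ᵥ y| := by
        rw [hB.mulVec_eigenvectorBasis, dotProduct_smul, hy, smul_eq_mul, mul_one, hi]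
    _ ≤ |y| ⬝ᵥ A.submatrix f f *ᵥ |y| :=
        abs_dotProduct_mulVec_le (fun a b => hA₀ (f a) (f b)) y
    _ = z ⬝ᵥ A *ᵥ z := by rw [← hzf, comp_dotProduct_submatrix_mulVec_comp hf A hz]
    _ ≤ specRad A * (z ⬝ᵥ z) := hA.dotProduct_mulVec_le_specRad z
    _ = specRad A := by
        rw [← comp_dotProduct_comp_of_injective hf hz, hzf, abs_dotProduct_abs, hy, mul_one]

end Hermitian

end Matrix

namespace SimpleGraph

open Matrix

variable {V W : Type*}

theorem adjMatrix_nonneg (G : SimpleGraph V) [DecidableRel G.Adj] (i j : V) :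
    0 ≤ G.adjMatrix ℝ i j := by
  by_cases h : G.Adj i j <;> simp [h]

theorem induce_compl_singleton_deleteEdges (G : SimpleGraph V) {v : V} {e : Sym2 V}
    (he : v ∈ e) : (G.deleteEdges {e}).induce {v}ᶜ = G.induce {v}ᶜ := by
  ext a b
  simp only [comap_adj, Function.Embedding.subtype_apply, deleteEdges_adj, Set.mem_singleton_iff,
    and_iff_left_iff_imp]
  rintro - rfl
  rcases Sym2.mem_iff.1 he with h | h
  · exact a.2 h.symm
  · exact b.2 h.symm

theorem eq_zero_of_nonneg_of_adjMatrix_mulVec_eq_smul [Fintype V] {G : SimpleGraph V}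
    [DecidableRel G.Adj] (hG : G.Connected) {c : ℝ} {z : V → ℝ} (hz : 0 ≤ z)
    (hcz : G.adjMatrix ℝ *ᵥ z = c • z) {v : V} (hv : z v = 0) : z = 0 := by
  have step {a b : V} (hab : G.Adj a b) (ha : z a = 0) : z b = 0 := by
    have h := congrFun hcz a
    rw [adjMatrix_mulVec_apply, Pi.smul_apply, ha, smul_zero] at h
    exact (Finset.sum_eq_zero_iff_of_nonneg fun u _ => hz u).1 h b (by simpa using hab)
  have walk {a b : V} (p : G.Walk a b) : z a = 0 → z b = 0 := by
    induction p with
    | nil => exact id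
    | cons hab _ ih => exact fun ha => ih (step hab ha)
  funext w
  exact walk (hG.preconnected v w).some hv

variable [Fintype V] [DecidableEq V]

theorem grho_eq (G : SimpleGraph V) [DecidableRel G.Adj] : grho G = specRad (G.adjMatrix ℝ) := by
  unfold grho
  congr!

section Embedding

variable [Fintype W] [DecidableEq W] {H : SimpleGraph W} {G : SimpleGraph V}

theorem dotProduct_adjMatrix_mulVec_le_grho [DecidableRel G.Adj] (f : H ↪g G) {x : V → ℝ}
    (hx : ∀ v ∉ Set.range f, x v = 0) : x ⬝ᵥ G.adjMatrix ℝ *ᵥ x ≤ grho H * (x ⬝ᵥ x) := by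
  rw [grho_eq, ← f.submatrix_adjMatrix ℝ, ← comp_dotProduct_submatrix_mulVec_comp f.injective _ hx,
    ← comp_dotProduct_comp_of_injective f.injective hx]
  exact ((adjMatrix_isHermitian G).submatrix f).dotProduct_mulVec_le_specRad _

theorem grho_le_of_embedding (f : H ↪g G) : grho H ≤ grho G := by
  rw [grho_eq, grho_eq, ← f.submatrix_adjMatrix ℝ]
  exact specRad_submatrix_le (adjMatrix_isHermitian G) (adjMatrix_nonneg G) f.injective

end Embedding

variable {G : SimpleGraph V}

theorem apply_ne_zero_of_adjMatrix_mulVec_eq_smul [DecidableRel G.Adj] (hG : G.Connected) {c : ℝ}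
    (hc : (c • 1 - G.adjMatrix ℝ).PosSemidef) {x : V → ℝ} (hx : G.adjMatrix ℝ *ᵥ x = c • x)
    (hx₀ : x ≠ 0) (v : V) : x v ≠ 0 := by
  intro hv
  have hquad : c * (|x| ⬝ᵥ |x|) ≤ |x| ⬝ᵥ G.adjMatrix ℝ *ᵥ |x| :=
    calc c * (|x| ⬝ᵥ |x|) = x ⬝ᵥ G.adjMatrix ℝ *ᵥ x := by
          rw [abs_dotProduct_abs, hx, dotProduct_smul, smul_eq_mul]
      _ ≤ |x ⬝ᵥ G.adjMatrix ℝ *ᵥ x| := le_abs_self _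
      _ ≤ _ := abs_dotProduct_mulVec_le (adjMatrix_nonneg G) x
  have habs := hc.mulVec_eq_smul_of_dotProduct_mulVec_eq
    (le_antisymm (hc.dotProduct_mulVec_le _) hquad)
  have := eq_zero_of_nonneg_of_adjMatrix_mulVec_eq_smul hG (abs_nonneg x) habs (v := v)
    (by simp [hv])
  exact hx₀ (funext fun w => abs_eq_zero.1 (congrFun this w))

theorem eigenvalues₀_one_lt_eigenvalues₀_zero [DecidableRel G.Adj] (hG : G.Connected)
    (hA : (G.adjMatrix ℝ).IsHermitian) (h : 1 < Fintype.card V) :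
    hA.eigenvalues₀ ⟨1, h⟩ < hA.eigenvalues₀ ⟨0, by omega⟩ := by
  refine lt_of_le_of_ne (hA.eigenvalues₀_antitone (Nat.zero_le _)) fun heq => ?_
  obtain ⟨p, q, hp, hq, hpp, hqq, hpq⟩ := hA.exists_eigenvectors_eigenvalues₀_zero_one h
  rw [heq] at hq
  have hc := hA.posSemidef_smul_one_sub (hA.eigenvalues_le_eigenvalues₀_zero (by omega))
  have hp₀ := apply_ne_zero_of_adjMatrix_mulVec_eq_smul hG hc hp (by rintro rfl; simp at hpp)
  obtain ⟨v⟩ : Nonempty V := Fintype.card_pos_iff.1 (by omega)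
  set x := (-q v) • p + p v • q
  have hx : G.adjMatrix ℝ *ᵥ x = hA.eigenvalues₀ ⟨0, by omega⟩ • x := by
    simp only [x, mulVec_add, mulVec_smul, hp, hq, smul_add, smul_comm (-q v), smul_comm (p v)]
  have hx₀ : x ≠ 0 := fun h0 => hp₀ v (by
    simpa [x, add_dotProduct, smul_dotProduct, hqq, dotProduct_comm q p, hpq] using
      congrArg (· ⬝ᵥ q) h0)
  exact apply_ne_zero_of_adjMatrix_mulVec_eq_smul hG hc hx hx₀ v (by simp [x]; ring)

theorem lambdaTwo_eq_eigenvalues₀_one [DecidableRel G.Adj] (hA : (G.adjMatrix ℝ).IsHermitian)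
    (h : 1 < Fintype.card V) : lambdaTwo G = hA.eigenvalues₀ ⟨1, h⟩ := by
  obtain rfl : ‹DecidableRel G.Adj› = Classical.decRel G.Adj := Subsingleton.elim _ _
  rw [lambdaTwo, sortedEigs, show Fintype.card V - 2 = Fintype.card V - 1 - 1 by omega]
  exact hA.getD_sort_eigenvalues h

theorem exists_lambdaTwo_lt_grho_induce_compl (hG : G.Connected) (h : 1 < Fintype.card V) :
    ∃ v, lambdaTwo G < grho (G.induce {v}ᶜ) := by
  by_contra! hle
  have hA := adjMatrix_isHermitian G
  obtain ⟨p, q, hp, hq, hpp, hqq, hpq⟩ := hA.exists_eigenvectors_eigenvalues₀_zero_one h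
  have hlt := eigenvalues₀_one_lt_eigenvalues₀_zero hG hA h
  rw [lambdaTwo_eq_eigenvalues₀_one hA h] at hle
  obtain ⟨v, hv⟩ : ∃ v, q v ≠ 0 := by
    by_contra! h0
    simp [funext h0] at hqq
  set x := (-q v) • p + p v • q
  have hx : ∀ w ∉ Set.range (Embedding.induce (G := G) {v}ᶜ), x w = 0 := by
    intro w hw
    obtain rfl : w = v := by_contra fun hwv => hw ⟨⟨w, hwv⟩, rfl⟩
    simp [x]
    ring
  have key := dotProduct_adjMatrix_mulVec_le_grho _ hx
  rw [dotProduct_mulVec_smul_add_smul hp hq hpq, dotProduct_smul_add_smul hpq, hpp, hqq] at key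
  have := mul_le_mul_of_nonneg_right (hle v) (by positivity : 0 ≤ (-q v) ^ 2 * 1 + p v ^ 2 * 1)
  nlinarith [sq_pos_of_ne_zero hv]

theorem exists_grho_induce_compl_le_grho_deleteEdges (hG : G.Connected)
    (h : 1 < Fintype.card V) (v : V) :
    ∃ e ∈ G.edgeSet, grho (G.induce {v}ᶜ) ≤ grho (G.deleteEdges {e}) := by
  have := Fintype.one_lt_card_iff_nontrivial.1 h
  obtain ⟨u, hvu⟩ := hG.preconnected.exists_adj_of_nontrivial v
  refine ⟨s(v, u), hvu, ?_⟩
  rw [← induce_compl_singleton_deleteEdges G (Sym2.mem_mk_left v u)]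
  exact grho_le_of_embedding (Embedding.induce _)

end SimpleGraph

/-- `λ₂(G) < max_{v} ρ(G−v) ≤ max_{e} ρ(G−e)` for a connected graph with at
least two vertices. -/
theorem lambdaTwo_lt_rhoV_le_rhoE
    {V : Type*} [Fintype V] [DecidableEq V] (G : SimpleGraph V)
    (hG : G.Connected) (hcard : 2 ≤ Fintype.card V) :
    lambdaTwo G < sSup {r : ℝ | ∃ v : V, r = grho (G.induce ({v}ᶜ : Set V))} ∧
    sSup {r : ℝ | ∃ v : V, r = grho (G.induce ({v}ᶜ : Set V))} ≤
      sSup {r : ℝ | ∃ e ∈ G.edgeSet, r = grho (G.deleteEdges {e})} := by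
  have hV : BddAbove {r : ℝ | ∃ v : V, r = grho (G.induce ({v}ᶜ : Set V))} :=
    (Set.finite_range fun v : V => grho (G.induce ({v}ᶜ : Set V))).bddAbove.mono <| by
      rintro _ ⟨v, rfl⟩
      exact ⟨v, rfl⟩
  have hE : BddAbove {r : ℝ | ∃ e ∈ G.edgeSet, r = grho (G.deleteEdges {e})} :=
    (G.edgeSet.toFinite.image fun e => grho (G.deleteEdges {e})).bddAbove.mono <| by
      rintro _ ⟨e, he, rfl⟩
      exact ⟨e, he, rfl⟩
  obtain ⟨v, hv⟩ := SimpleGraph.exists_lambdaTwo_lt_grho_induce_compl hG hcard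
  refine ⟨hv.trans_le (le_csSup hV ⟨v, rfl⟩), csSup_le ⟨grho (G.induce {v}ᶜ), v, rfl⟩ ?_⟩
  rintro _ ⟨w, rfl⟩
  obtain ⟨e, he, hle⟩ := SimpleGraph.exists_grho_induce_compl_le_grho_deleteEdges hG hcard w
  exact hle.trans (le_csSup hE ⟨e, he, rfl⟩)
end

section
/- Let G be a connected finite simple graph that is not bipartite, and let λ_min(G) denote the smallest eigenvalue of its adjacency matrix. Then −λ_min(G) < max_{e ∈ E} ρ(G−e). -/
open Matrix Finset
open scoped Classical

/-- smallest adjacency eigenvalue -/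
noncomputable def lamMin {V : Type*} [Fintype V] [DecidableEq V] (G : SimpleGraph V) : ℝ :=
  letI := Classical.decRel G.Adj
  sInf {μ : ℝ | IsEigenval (G.adjMatrix ℝ) μ}

/-! Let `μ = λ_min(G)` with eigenvector `y`, and suppose `ρ(G - e) ≤ -μ` for every edge `e`. Then
every `A(G - e) - μ I` is positive semidefinite, and since `A(G) = A(G - uv) + (e_u e_vᵀ + e_v e_uᵀ)`
its quadratic form at `y` is `-2 y_u y_v`. Hence `y_u y_v ≤ 0` on every edge, and equality puts `y`
in the kernel of `A(G - uv) - μ I`, forcing `y_u = y_v = 0`. Zeros therefore spread along edges;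
by connectivity `y` has none, so it changes sign along every edge and its sign pattern is a
bipartition. -/

section Eigenval

variable {n : Type*} [Fintype n] [DecidableEq n] {B : Matrix n n ℝ} {m μ : ℝ}

lemma IsEigenval.mem_spectrum (h : IsEigenval B μ) : μ ∈ spectrum ℝ B := by
  obtain ⟨x, hx0, hx⟩ := h
  rw [← AlgEquiv.spectrum_eq (toLinAlgEquiv' (R := ℝ) (n := n)),
    ← Module.End.hasEigenvalue_iff_mem_spectrum]
  exact Module.End.hasEigenvalue_of_hasEigenvector
    ⟨Module.End.mem_eigenspace_iff.mpr (by simpa using hx), hx0⟩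

lemma IsEigenval.abs_le_specRad (h : IsEigenval B μ) : |μ| ≤ specRad B := by
  refine le_csSup ?_ ⟨μ, h, rfl⟩
  refine ((B.finite_real_spectrum.image (|·|)).bddAbove).mono ?_
  rintro _ ⟨ν, hν, rfl⟩
  exact ⟨ν, hν.mem_spectrum, rfl⟩

lemma IsEigenval.le_of_posSemidef_sub (h : IsEigenval B μ) (hB : (B - m • 1).PosSemidef) :
    m ≤ μ := by
  obtain ⟨x, hx0, hx⟩ := h
  have hpos : 0 < x ⬝ᵥ x := by simpa using dotProduct_self_star_pos_iff.mpr hx0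
  have := hB.dotProduct_mulVec_nonneg x
  simp only [star_trivial, sub_mulVec, smul_mulVec, one_mulVec, hx, dotProduct_sub,
    dotProduct_smul, smul_eq_mul] at this
  nlinarith

lemma sInf_setOf_isEigenval_eq (h : IsEigenval B m) (hB : (B - m • 1).PosSemidef) :
    sInf {μ | IsEigenval B μ} = m :=
  IsLeast.csInf_eq ⟨h, fun _ hμ => hμ.le_of_posSemidef_sub hB⟩

end Eigenval

namespace Matrix.IsHermitian

variable {n : Type*} [Fintype n] [DecidableEq n] {B : Matrix n n ℝ} {m : ℝ}

open scoped MatrixOrder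

lemma posSemidef_sub_smul_one_iff (hB : B.IsHermitian) :
    (B - m • 1).PosSemidef ↔ ∀ i, m ≤ hB.eigenvalues i := by
  rw [← le_iff, ← Algebra.algebraMap_eq_smul_one, algebraMap_le_iff_le_spectrum hB.isSelfAdjoint,
    hB.spectrum_real_eq_range_eigenvalues, Set.forall_mem_range]

lemma isEigenval_eigenvalues (hB : B.IsHermitian) (i : n) : IsEigenval B (hB.eigenvalues i) :=
  ⟨hB.eigenvectorBasis i, by simpa using hB.eigenvectorBasis.orthonormal.ne_zero i,
    hB.mulVec_eigenvectorBasis i⟩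

lemma exists_isEigenval_posSemidef_sub [Nonempty n] (hB : B.IsHermitian) :
    ∃ m, IsEigenval B m ∧ (B - m • 1).PosSemidef := by
  obtain ⟨i, -, hi⟩ := exists_min_image univ hB.eigenvalues univ_nonempty
  exact ⟨hB.eigenvalues i, hB.isEigenval_eigenvalues i,
    hB.posSemidef_sub_smul_one_iff.mpr fun j => hi j (mem_univ j)⟩

lemma posSemidef_sub_smul_one_of_specRad_le (hB : B.IsHermitian) (h : specRad B ≤ -m) :
    (B - m • 1).PosSemidef :=
  hB.posSemidef_sub_smul_one_iff.mpr fun i => by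
    have := (hB.isEigenval_eigenvalues i).abs_le_specRad
    linarith [neg_abs_le (hB.eigenvalues i)]

end Matrix.IsHermitian

namespace SimpleGraph

variable {V : Type*} {G : SimpleGraph V}

lemma Preconnected.eq_zero_of_adj {y : V → ℝ} (hG : G.Preconnected)
    (h : ∀ u v, G.Adj u v → y u = 0 → y v = 0) {a : V} (ha : y a = 0) : y = 0 := by
  funext v
  obtain ⟨w⟩ := hG a v
  induction w with
  | nil => exact ha
  | cons huv _ ih => exact ih (h _ _ huv ha)

-- `_root_.IsBipartite` is the `Bool`-colouring of the statement, not `SimpleGraph.IsBipartite`.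
lemma Connected.isBipartite_of_adj {y : V → ℝ} (hG : G.Connected) (hy : y ≠ 0)
    (h : ∀ u v, G.Adj u v → y u * y v < 0 ∨ y u = 0 ∧ y v = 0) : _root_.IsBipartite G := by
  have hne : ∀ v, y v ≠ 0 := fun a ha =>
    hy (hG.preconnected.eq_zero_of_adj (fun u v huv hu => ((h u v huv).resolve_left
      (by simp [hu])).2) ha)
  refine ⟨fun v => decide (0 < y v), fun u v huv => ?_⟩
  rcases h u v huv with hneg | ⟨hu, -⟩
  · rw [ne_eq, decide_eq_decide]
    rcases mul_neg_iff.mp hneg with ⟨hu, hv⟩ | ⟨hu, hv⟩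
    · exact fun hiff => (hiff.mp hu).not_gt hv
    · exact fun hiff => (hiff.mpr hv).not_gt hu
  · exact absurd hu (hne u)

variable [DecidableEq V] [DecidableRel G.Adj]

lemma adjMatrix_eq_adjMatrix_deleteEdges_add {α : Type*} [NonAssocSemiring α] {u v : V}
    (h : G.Adj u v) :
    G.adjMatrix α = (G.deleteEdges {s(u, v)}).adjMatrix α + (single u v 1 + single v u 1) := by
  ext i j
  by_cases hij : s(i, j) = s(u, v)
  · rcases Sym2.eq_iff.mp hij with ⟨rfl, rfl⟩ | ⟨rfl, rfl⟩
    · simp [h, h.ne]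
    · simp [h.symm, h.ne]
  · have : ¬ (u = i ∧ v = j) ∧ ¬ (v = i ∧ u = j) := by
      constructor <;> rintro ⟨rfl, rfl⟩ <;> simp at hij
    simp [hij, this.1, this.2]

variable [Fintype V]

variable (G) in
lemma grho_eq_specRad : grho G = specRad (G.adjMatrix ℝ) := by
  unfold grho; congr

variable (G) in
lemma lamMin_eq_sInf : lamMin G = sInf {μ | IsEigenval (G.adjMatrix ℝ) μ} := by
  unfold lamMin; congr!

lemma mul_neg_or_eq_zero_of_posSemidef_deleteEdges {u v : V} {μ : ℝ} {y : V → ℝ}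
    (huv : G.Adj u v) (hy : G.adjMatrix ℝ *ᵥ y = μ • y)
    (hB : ((G.deleteEdges {s(u, v)}).adjMatrix ℝ - μ • 1).PosSemidef) :
    y u * y v < 0 ∨ y u = 0 ∧ y v = 0 := by
  set E : Matrix V V ℝ := single u v 1 + single v u 1
  have hEy : E *ᵥ y = Pi.single u (y v) + Pi.single v (y u) := by
    simp [E, add_mulVec, single_mulVec_eq, ← Pi.single_smul]
  have hBy : ((G.deleteEdges {s(u, v)}).adjMatrix ℝ - μ • 1) *ᵥ y = -(E *ᵥ y) := by
    rw [sub_mulVec, smul_mulVec, one_mulVec, ← hy, G.adjMatrix_eq_adjMatrix_deleteEdges_add huv,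
      add_mulVec]
    abel
  have hquad :
      y ⬝ᵥ ((G.deleteEdges {s(u, v)}).adjMatrix ℝ - μ • 1) *ᵥ y = -(2 * (y u * y v)) := by
    rw [hBy, hEy]
    simp only [neg_add_rev, dotProduct_add, dotProduct_neg, dotProduct_single]
    ring
  have hnonneg := hB.dotProduct_mulVec_nonneg y
  rw [star_trivial, hquad] at hnonneg
  rcases (show y u * y v ≤ 0 by linarith).lt_or_eq with hneg | hzero
  · exact Or.inl hneg
  · have hker := (hB.dotProduct_mulVec_zero_iff y).mp (by rw [star_trivial, hquad, hzero]; simp)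
    rw [hBy, neg_eq_zero, hEy] at hker
    have hv : y v = 0 := by simpa [huv.ne] using congr_fun hker u
    have hu : y u = 0 := by simpa [huv.ne.symm] using congr_fun hker v
    exact Or.inr ⟨hu, hv⟩

end SimpleGraph

/-- For a connected non-bipartite graph,
`−λ_min(G) < max_{e ∈ E} ρ(G−e)`. -/
theorem neg_lamMin_lt_rhoE
    {V : Type*} [Fintype V] [DecidableEq V] (G : SimpleGraph V)
    (hG : G.Connected) (hnb : ¬ IsBipartite G) :
    -lamMin G < sSup {r : ℝ | ∃ e ∈ G.edgeSet, r = grho (G.deleteEdges {e})} := by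
  have := hG.nonempty
  obtain ⟨μ, ⟨y, hy0, hy⟩, hμ⟩ := (G.isHermitian_adjMatrix ℝ).exists_isEigenval_posSemidef_sub
  rw [G.lamMin_eq_sInf, sInf_setOf_isEigenval_eq ⟨y, hy0, hy⟩ hμ]
  by_contra! hle
  have hbdd : BddAbove {r : ℝ | ∃ e ∈ G.edgeSet, r = grho (G.deleteEdges {e})} :=
    (G.edgeSet.toFinite.image fun e => grho (G.deleteEdges {e})).bddAbove.mono <| by
      rintro _ ⟨e, he, rfl⟩; exact ⟨e, he, rfl⟩
  refine hnb (hG.isBipartite_of_adj hy0 fun u v huv =>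
    SimpleGraph.mul_neg_or_eq_zero_of_posSemidef_deleteEdges huv hy ?_)
  refine ((G.deleteEdges {s(u, v)}).isHermitian_adjMatrix ℝ).posSemidef_sub_smul_one_of_specRad_le
    ?_
  rw [← SimpleGraph.grho_eq_specRad]
  exact (le_csSup hbdd ⟨s(u, v), huv, rfl⟩).trans hle
end

section
/- Let G be a finite simple graph, k ≥ 3 an integer, and λ a complex eigenvalue of the k-power hypergraph G^(k). Then the nonnegative real number |λ| is also an eigenvalue of G^(k). -/
open Matrix Finset
open scoped Classical

/-!
If `x` is an eigenvector for `λ ≠ 0`, the equations at the new vertices of an edge `e = {i, j}`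
force `x_v ^ k` to take a common value `S_e` for `v ∈ N_e`, and then `x_i ^ k = ∑_{e ∋ i} S_e`
and `λ ^ k S_e ^ 2 = x_i ^ k x_j ^ k`. Choosing square roots `z_i ^ 2 = x_i ^ k` and
`σ ^ 2 = λ ^ k` gives `σ S_e = ε_e z_i z_j` with `ε_e ∈ {0, 1, -1}`, so `σ` is an eigenvalue of
the real symmetric matrix `(ε_e)` with eigenvector `z`. Hence `σ` is real and `λ ^ k = σ ^ 2 ≥ 0`,
i.e. `ω = |λ| / λ` is a `k`-th root of unity; multiplying one new vertex of every edge by `ω`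
turns `x` into an eigenvector for `ω λ = |λ|`.
-/

open ComplexConjugate ComplexOrder

theorem Matrix.IsHermitian.conj_eq_of_mulVec_eq_smul {n 𝕜 : Type*} [Fintype n] [RCLike 𝕜]
    {A : Matrix n n 𝕜} (hA : A.IsHermitian) {μ : 𝕜} {v : n → 𝕜} (hv : v ≠ 0)
    (h : A *ᵥ v = μ • v) : conj μ = μ := by
  refine (isSymmetric_toEuclideanLin_iff.mpr hA).conj_eigenvalue_eq_self
    (Module.End.hasEigenvalue_of_hasEigenvector (x := WithLp.toLp 2 v) ⟨?_, ?_⟩)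
  · rw [Module.End.mem_eigenspace_iff]
    exact congrArg (WithLp.toLp 2) h
  · simpa using hv

theorem Matrix.IsSymm.nonneg_of_sum_eq_of_mul_sq_eq {n : Type*} [Fintype n] {S : Matrix n n ℂ}
    (hS : S.IsSymm) {y : n → ℂ} {μ : ℂ} (hy : y ≠ 0) (hsum : ∀ i, ∑ j, S i j = y i)
    (hsq : ∀ i j, S i j ≠ 0 → μ * S i j ^ 2 = y i * y j) : 0 ≤ μ := by
  choose z hz using fun i => IsAlgClosed.exists_eq_mul_self (y i)
  obtain ⟨σ, rfl⟩ := IsAlgClosed.exists_eq_mul_self μ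
  have hsign : ∀ i j, σ * S i j = 0 ∨ σ * S i j = z i * z j ∨ σ * S i j = -(z i * z j) := by
    intro i j
    by_cases hSij : S i j = 0
    · simp [hSij]
    · have : (σ * S i j - z i * z j) * (σ * S i j + z i * z j) = 0 := by
        linear_combination hsq i j hSij + hz i * y j + z i * z i * hz j
      rcases mul_eq_zero.mp this with h | h
      · exact .inr (.inl (sub_eq_zero.mp h))
      · exact .inr (.inr (eq_neg_of_add_eq_zero_left h))
  let ε : Matrix n n ℂ := of fun i j =>
    if σ * S i j = 0 then 0 else if σ * S i j = z i * z j then 1 else -1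
  have hε : ∀ i j, ε i j * (z i * z j) = σ * S i j := by
    intro i j
    rcases hsign i j with h | h | h <;> simp only [ε, of_apply] <;> split_ifs <;> grind
  have hεH : ε.IsHermitian := by
    ext i j
    simp only [ε, conjTranspose_apply, of_apply, hS.apply, mul_comm (z j)]
    split_ifs <;> simp
  have hεz : ε *ᵥ z = σ • z := by
    funext i
    by_cases hzi : z i = 0
    · have hεi : ∀ j, ε i j = 0 := fun j => by
        have h0 : σ * S i j = 0 := by simpa [hzi] using (hε i j).symm
        simp only [ε, of_apply, h0, if_true]
      simp [mulVec, dotProduct, hεi, hzi]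
    · refine mul_left_cancel₀ hzi ?_
      calc z i * (ε *ᵥ z) i = ∑ j, ε i j * (z i * z j) := by
            simp only [mulVec, dotProduct, Finset.mul_sum]; ring_nf
        _ = σ * (z i * z i) := by simp only [hε, ← Finset.mul_sum, hsum, hz]
        _ = z i * (σ • z) i := by simp; ring
  have hz0 : z ≠ 0 := by
    contrapose! hy
    funext i; simp [hz, hy]
  obtain ⟨r, rfl⟩ := Complex.conj_eq_iff_real.mp (hεH.conj_eq_of_mulVec_eq_smul hz0 hεz)
  exact_mod_cast Complex.zero_le_real.mpr (mul_self_nonneg r)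

namespace SimpleGraph.Adj

variable {V : Type*} {G : SimpleGraph V} {k : ℕ} {i j : V}

def powerVertex (h : G.Adj i j) (t : Fin (k - 2)) : V ⊕ (G.edgeSet × Fin (k - 2)) :=
  Sum.inr (⟨s(i, j), G.mem_edgeSet.mpr h⟩, t)

theorem powerVertex_symm (h : G.Adj i j) (t : Fin (k - 2)) :
    h.symm.powerVertex t = h.powerVertex t := by
  simp only [powerVertex, Sym2.eq_swap]

end SimpleGraph.Adj

namespace IsPowerEigenpair

variable {V : Type*} [Fintype V] [DecidableEq V] {G : SimpleGraph V} {k : ℕ} {lam : ℂ}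
  {x : V ⊕ (G.edgeSet × Fin (k - 2)) → ℂ}

theorem eq_sum (hx : IsPowerEigenpair G k lam x) (i : V) :
    lam * x (Sum.inl i) ^ (k - 1) =
      ∑ j, if h : G.Adj i j then x (Sum.inl j) * ∏ t, x (h.powerVertex t) else 0 :=
  hx.2.1 i

theorem eq_prod_erase (hx : IsPowerEigenpair G k lam x) {i j : V} (h : G.Adj i j)
    (t : Fin (k - 2)) :
    lam * x (h.powerVertex t) ^ (k - 1) =
      x (Sum.inl i) * x (Sum.inl j) * ∏ u ∈ Finset.univ.erase t, x (h.powerVertex u) :=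
  hx.2.2 i j h t

theorem mul_powerVertex_pow (hx : IsPowerEigenpair G k lam x) (hk : k ≠ 0) {i j : V}
    (h : G.Adj i j) (t : Fin (k - 2)) :
    lam * x (h.powerVertex t) ^ k =
      x (Sum.inl i) * x (Sum.inl j) * ∏ u, x (h.powerVertex u) := by
  rw [← Finset.mul_prod_erase _ _ (Finset.mem_univ t), ← pow_sub_one_mul hk]
  linear_combination x (h.powerVertex t) * hx.eq_prod_erase h t

theorem powerVertex_pow_eq (hx : IsPowerEigenpair G k lam x) (hk : k ≠ 0) (hlam : lam ≠ 0)
    {i j : V} (h : G.Adj i j) (t u : Fin (k - 2)) :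
    x (h.powerVertex u) ^ k = x (h.powerVertex t) ^ k :=
  mul_left_cancel₀ hlam <| (hx.mul_powerVertex_pow hk h u).trans
    (hx.mul_powerVertex_pow hk h t).symm

theorem inl_pow_eq_sum (hx : IsPowerEigenpair G k lam x) (hk : k ≠ 0) (hlam : lam ≠ 0)
    (t : Fin (k - 2)) (i : V) :
    x (Sum.inl i) ^ k = ∑ j, if h : G.Adj i j then x (h.powerVertex t) ^ k else 0 := by
  refine mul_left_cancel₀ hlam ?_
  rw [Finset.mul_sum, ← pow_sub_one_mul hk, ← mul_assoc, hx.eq_sum i, Finset.sum_mul]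
  refine Finset.sum_congr rfl fun j _ => ?_
  split_ifs with h
  · rw [hx.mul_powerVertex_pow hk h t]
    ring
  · simp

theorem pow_mul_powerVertex_pow_sq (hx : IsPowerEigenpair G k lam x) (hk : 2 ≤ k)
    (hlam : lam ≠ 0) {i j : V} (h : G.Adj i j) (t : Fin (k - 2))
    (ht : x (h.powerVertex t) ^ k ≠ 0) :
    lam ^ k * (x (h.powerVertex t) ^ k) ^ 2 = x (Sum.inl i) ^ k * x (Sum.inl j) ^ k := by
  have hk0 : k ≠ 0 := by omega
  have hprod : (∏ u, x (h.powerVertex u)) ^ k = (x (h.powerVertex t) ^ k) ^ (k - 2) := by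
    rw [← Finset.prod_pow, Finset.prod_congr rfl fun u _ => hx.powerVertex_pow_eq hk0 hlam h t u,
      Finset.prod_const, Finset.card_univ, Fintype.card_fin]
  refine mul_left_cancel₀ (pow_ne_zero (k - 2) ht) ?_
  calc (x (h.powerVertex t) ^ k) ^ (k - 2) * (lam ^ k * (x (h.powerVertex t) ^ k) ^ 2)
      = (lam * x (h.powerVertex t) ^ k) ^ k := by
        rw [mul_pow, mul_left_comm, ← pow_add, Nat.sub_add_cancel hk]
    _ = _ := by rw [hx.mul_powerVertex_pow hk0 h t, mul_pow, hprod, mul_pow]; ring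

theorem exists_inl_ne_zero (hx : IsPowerEigenpair G k lam x) (hk : k ≠ 0) (hlam : lam ≠ 0) :
    ∃ i, x (Sum.inl i) ≠ 0 := by
  obtain ⟨a, ha⟩ := Function.ne_iff.mp hx.1
  rcases a with i | ⟨⟨e, he⟩, t⟩
  · exact ⟨i, ha⟩
  · induction e using Sym2.ind with
    | _ i j =>
      have h : G.Adj i j := G.mem_edgeSet.mp he
      have hne := hx.mul_powerVertex_pow hk h t ▸ mul_ne_zero hlam (pow_ne_zero k ha)
      exact ⟨i, left_ne_zero_of_mul (left_ne_zero_of_mul hne)⟩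

end IsPowerEigenpair

namespace IsPowerEigenvalue

variable {V : Type*} [Fintype V] [DecidableEq V] {G : SimpleGraph V} {k : ℕ} {lam : ℂ}

theorem pow_nonneg (hk : 3 ≤ k) (hlam : IsPowerEigenvalue G k lam) : 0 ≤ lam ^ k := by
  rcases eq_or_ne lam 0 with rfl | hlam0
  · rw [zero_pow (by omega)]
  obtain ⟨x, hx⟩ := hlam
  have hk0 : k ≠ 0 := by omega
  let t : Fin (k - 2) := ⟨0, by omega⟩
  refine Matrix.IsSymm.nonneg_of_sum_eq_of_mul_sq_eq (y := fun i => x (Sum.inl i) ^ k)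
    (S := of fun i j => if h : G.Adj i j then x (h.powerVertex t) ^ k else 0) ?_ ?_ ?_ ?_
  · ext i j
    by_cases h : G.Adj i j
    · simp [h, h.symm, h.powerVertex_symm]
    · simp [h, mt G.adj_symm h]
  · obtain ⟨i, hi⟩ := hx.exists_inl_ne_zero hk0 hlam0
    exact fun hy => hi (pow_eq_zero_iff hk0 |>.mp (congrFun hy i))
  · exact fun i => (hx.inl_pow_eq_sum hk0 hlam0 t i).symm
  · intro i j hS
    simp only [of_apply] at hS ⊢
    split_ifs at hS ⊢ with h
    · exact hx.pow_mul_powerVertex_pow_sq (by omega) hlam0 h t hS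
    · exact absurd rfl hS

theorem mul_of_pow_eq_one (hk : 3 ≤ k) {ω : ℂ} (hω : ω ^ k = 1)
    (hlam : IsPowerEigenvalue G k lam) : IsPowerEigenvalue G k (ω * lam) := by
  obtain ⟨x, hx0, hv, he⟩ := hlam
  have hω0 : ω ≠ 0 := by rintro rfl; simp [zero_pow (by omega : k ≠ 0)] at hω
  let t₀ : Fin (k - 2) := ⟨0, by omega⟩
  let c : Fin (k - 2) → ℂ := Pi.mulSingle t₀ ω
  have hc : ∀ t, c t ≠ 0 := fun t => by
    by_cases ht : t = t₀ <;> simp [c, ht, hω0]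
  refine ⟨Sum.elim (x ∘ Sum.inl) (fun p => c p.2 * x (Sum.inr p)), ?_, fun i => ?_,
    fun i j h t => ?_⟩
  · obtain ⟨a, ha⟩ := Function.ne_iff.mp hx0
    refine Function.ne_iff.mpr ⟨a, ?_⟩
    rcases a with i | p
    · exact ha
    · exact mul_ne_zero (hc p.2) ha
  · simp only [Sum.elim_inl, Sum.elim_inr, Function.comp_apply]
    rw [mul_assoc, hv i, Finset.mul_sum]
    refine Finset.sum_congr rfl fun j _ => ?_
    split_ifs
    · simp only [c, Finset.prod_mul_distrib, Finset.prod_pi_mulSingle', Finset.mem_univ, if_true]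
      ring
    · simp
  · simp only [Sum.elim_inl, Sum.elim_inr, Function.comp_apply]
    have hcoef : ω * c t ^ (k - 1) = ∏ u ∈ Finset.univ.erase t, c u := by
      by_cases ht : t = t₀
      · simp [c, ht, ← pow_succ', Nat.sub_add_cancel (by omega : 1 ≤ k), hω]
      · simp [c, ht, Ne.symm ht]
    rw [Finset.prod_mul_distrib, ← hcoef, mul_pow]
    linear_combination ω * c t ^ (k - 1) * he i j h t

end IsPowerEigenvalue

/-- If `λ` is an eigenvalue of the power hypergraph `G^(k)`, then so is the
nonnegative real number `|λ|`. -/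
theorem abs_isPowerEigenvalue
    {V : Type*} [Fintype V] [DecidableEq V] (G : SimpleGraph V)
    (k : ℕ) (hk : 3 ≤ k) (lam : ℂ) (hlam : IsPowerEigenvalue G k lam) :
    IsPowerEigenvalue G k ((‖lam‖ : ℝ) : ℂ) := by
  rcases eq_or_ne lam 0 with rfl | hlam0
  · simpa using hlam
  have hω : (((‖lam‖ : ℝ) : ℂ) / lam) ^ k = 1 := by
    rw [div_pow, ← Complex.ofReal_pow, ← norm_pow,
      ← Complex.eq_coe_norm_of_nonneg (hlam.pow_nonneg hk), div_self (pow_ne_zero k hlam0)]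
  simpa only [div_mul_cancel₀ _ hlam0] using hlam.mul_of_pow_eq_one hk hω
end

section
/- Let k ≥ 3 be an integer and μ a nonzero complex number. Consider the system of k−2 polynomial equations μ x_i^{k−1} = ∏_{j ∈ {1,…,k−2}, j ≠ i} x_j for i = 1, …, k−2, in x ∈ ℂ^{k−2} (empty products equal 1). Then the set of nonzero solutions x ∈ ℂ^{k−2} of this system has exactly 2·k^{k−3} elements. -/
/-!
Multiplying the `i`-th equation by `x_i` gives `μ x_i ^ k = ∏_j x_j` for every `i`. Hence a nonzero
solution has no zero coordinate, and its coordinates have equal `k`-th powers, so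
`x = c • (1, ζ)` with `ζ` a vector of `k - 3` roots of unity of order dividing `k`. The remaining
equation reads `μ c ^ 2 = ∏ ζ`, which has exactly two solutions `c` for each of the `k ^ (k - 3)`
choices of `ζ`.
-/

open Finset Polynomial

def nonzeroSolutions {K : Type*} [Field K] (ι : Type*) [Fintype ι] [DecidableEq ι] (μ : K)
    (e : ℕ) : Set (ι → K) :=
  {x | x ≠ 0 ∧ ∀ i, μ * x i ^ e = ∏ j ∈ univ.erase i, x j}

section Field

variable {K : Type*} [Field K] {μ : K}

theorem eq_zero_of_mul_pow_eq_prod_erase {ι : Type*} [Fintype ι] [DecidableEq ι] (hμ : μ ≠ 0)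
    {e : ℕ} (he : e ≠ 0) {x : ι → K} (hx : ∀ i, μ * x i ^ e = ∏ j ∈ univ.erase i, x j)
    {i : ι} (hi : x i = 0) : x = 0 := by
  obtain ⟨j, hj, hxj⟩ := prod_eq_zero_iff.mp ((hx i).symm.trans (by simp [hi, he]))
  funext l
  have hl : ∏ t ∈ univ.erase l, x t = 0 := by
    rcases eq_or_ne l i with rfl | hli
    · exact prod_eq_zero hj hxj
    · exact prod_eq_zero (mem_erase.mpr ⟨hli.symm, mem_univ i⟩) hi
  simpa [hμ, he] using (hx l).trans hl

theorem mem_nonzeroSolutions_iff {ι : Type*} [Fintype ι] [DecidableEq ι] [Nonempty ι]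
    (hμ : μ ≠ 0) {e : ℕ} (he : e ≠ 0) {x : ι → K} :
    x ∈ nonzeroSolutions ι μ e ↔ (∀ i, x i ≠ 0) ∧ ∀ i, μ * x i ^ (e + 1) = ∏ j, x j := by
  constructor
  · rintro ⟨hx0, hx⟩
    have hne : ∀ i, x i ≠ 0 := fun i hi => hx0 (eq_zero_of_mul_pow_eq_prod_erase hμ he hx hi)
    refine ⟨hne, fun i => ?_⟩
    rw [← mul_prod_erase univ x (mem_univ i), ← hx i]
    ring
  · rintro ⟨hne, hx⟩
    refine ⟨fun h => hne (Classical.arbitrary ι) (congrFun h _), fun i => ?_⟩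
    apply mul_left_cancel₀ (hne i)
    rw [mul_prod_erase univ x (mem_univ i), ← hx i]
    ring

theorem Fin.cons_smul_tail_div_eq_self {m : ℕ} {x : Fin (m + 1) → K} (h : x 0 ≠ 0) :
    (Fin.cons (x 0) (x 0 • fun i => x i.succ / x 0) : Fin (m + 1) → K) = x := by
  ext i
  cases i using Fin.cases <;> simp [mul_div_cancel₀ _ h]

theorem cons_smul_mem_nonzeroSolutions_iff {m : ℕ} (hμ : μ ≠ 0) {c : K} {ζ : Fin m → K} :
    (Fin.cons c (c • ζ) : Fin (m + 1) → K) ∈ nonzeroSolutions (Fin (m + 1)) μ (m + 2) ↔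
      (∀ i, ζ i ^ (m + 3) = 1) ∧ c ^ 2 = (∏ i, ζ i) / μ := by
  rw [mem_nonzeroSolutions_iff hμ (by omega)]
  simp only [Fin.forall_fin_succ, Fin.prod_univ_succ, Fin.cons_zero, Fin.cons_succ, Pi.smul_apply,
    smul_eq_mul, prod_mul_distrib, prod_const, card_univ, Fintype.card_fin]
  constructor
  · rintro ⟨⟨hc, -⟩, h0, hsucc⟩
    have hc2 : μ * c ^ 2 = ∏ i, ζ i := by
      apply mul_left_cancel₀ (pow_ne_zero (m + 1) hc)
      linear_combination h0
    refine ⟨fun i => ?_, by rw [eq_div_iff hμ, ← hc2]; ring⟩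
    apply mul_left_cancel₀ (mul_ne_zero hμ (pow_ne_zero (m + 3) hc))
    linear_combination hsucc i - h0
  · rintro ⟨hζ, hc2⟩
    have hζ0 : ∀ i, ζ i ≠ 0 := fun i h => by simpa [h] using hζ i
    have hP : ∏ i, ζ i = μ * c ^ 2 := by rw [hc2]; field_simp
    have hc : c ≠ 0 := fun h => prod_ne_zero_iff.mpr (fun i _ => hζ0 i) (by rw [hP, h]; ring)
    refine ⟨⟨hc, fun i => mul_ne_zero hc (hζ0 i)⟩, by rw [hP]; ring, fun i => ?_⟩
    rw [mul_pow, hζ i, hP]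
    ring

end Field

theorem Complex.card_nthRootsFinset {n : ℕ} (hn : n ≠ 0) {a : ℂ} (ha : a ≠ 0) :
    #(nthRootsFinset n a) = n := by
  classical
  have hζ := Complex.isPrimitiveRoot_exp n hn
  rw [nthRootsFinset_def, Multiset.toFinset_card_of_nodup (hζ.nthRoots_nodup ha),
    hζ.card_nthRoots, if_pos (IsAlgClosed.exists_pow_nat_eq a (Nat.pos_of_ne_zero hn))]

theorem ncard_nonzeroSolutions_fin_succ (m : ℕ) {μ : ℂ} (hμ : μ ≠ 0) :
    (nonzeroSolutions (Fin (m + 1)) μ (m + 2)).ncard = 2 * (m + 3) ^ m := by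
  set S := nonzeroSolutions (Fin (m + 1)) μ (m + 2)
  let F : (Σ ζ : Fin m → nthRootsFinset (m + 3) (1 : ℂ),
      nthRootsFinset 2 ((∏ i, (ζ i : ℂ)) / μ)) → S := fun p =>
    ⟨Fin.cons p.2 (p.2.1 • fun i => (p.1 i : ℂ)), (cons_smul_mem_nonzeroSolutions_iff hμ).mpr
      ⟨fun i => (mem_nthRootsFinset (by omega) 1).mp (p.1 i).2,
        (mem_nthRootsFinset two_pos _).mp p.2.2⟩⟩
  have hprod (ζ : Fin m → nthRootsFinset (m + 3) (1 : ℂ)) : (∏ i, (ζ i : ℂ)) / μ ≠ 0 :=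
    div_ne_zero (prod_ne_zero_iff.mpr fun i _ =>
      ne_zero_of_mem_nthRootsFinset one_ne_zero (ζ i).2) hμ
  have hF : Function.Bijective F := by
    constructor
    · rintro ⟨ζ, c⟩ ⟨ζ', c'⟩ h
      obtain ⟨hc, hζ⟩ := Fin.cons_inj.mp (Subtype.mk.inj h)
      rw [← hc] at hζ
      obtain rfl : ζ = ζ' := funext fun i => Subtype.ext <| congrFun
        (smul_right_injective _ (ne_zero_of_mem_nthRootsFinset (hprod ζ) c.2) hζ) i
      exact Sigma.subtype_ext rfl hc
    · rintro ⟨x, hx⟩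
      have hx0 : x 0 ≠ 0 := ((mem_nonzeroSolutions_iff hμ (by omega)).mp hx).1 0
      rw [← Fin.cons_smul_tail_div_eq_self hx0] at hx
      obtain ⟨hζ, hc⟩ := (cons_smul_mem_nonzeroSolutions_iff hμ).mp hx
      exact ⟨⟨fun i => ⟨x i.succ / x 0, (mem_nthRootsFinset (by omega) 1).mpr (hζ i)⟩,
        ⟨x 0, (mem_nthRootsFinset two_pos _).mpr hc⟩⟩,
        Subtype.ext (Fin.cons_smul_tail_div_eq_self hx0)⟩
  rw [← Nat.card_coe_set_eq, ← Nat.card_eq_of_bijective F hF, Nat.card_sigma]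
  simp only [Nat.card_eq_finsetCard, Complex.card_nthRootsFinset two_ne_zero (hprod _),
    sum_const, card_univ, Fintype.card_fun, Fintype.card_coe,
    Complex.card_nthRootsFinset (by omega : m + 3 ≠ 0) one_ne_zero, Fintype.card_fin, smul_eq_mul]
  ring

/-- For `k ≥ 3` and `μ ≠ 0`, the system
`μ x_i^{k−1} = ∏_{j ≠ i} x_j` (`i = 1, …, k−2`) has exactly `2·k^{k−3}` nonzero solutions
in `ℂ^{k−2}`. -/
theorem card_nonzero_solutions_km2
    (k : ℕ) (hk : 3 ≤ k) (μ : ℂ) (hμ : μ ≠ 0) :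
    {x : Fin (k - 2) → ℂ | x ≠ 0 ∧
        ∀ i, μ * x i ^ (k - 1) = ∏ j ∈ Finset.univ.erase i, x j}.ncard
      = 2 * k ^ (k - 3) := by
  obtain ⟨m, rfl⟩ : ∃ m, k = m + 3 := ⟨k - 3, by omega⟩
  exact ncard_nonzeroSolutions_fin_succ m hμ
end

section
/- Let k ≥ 3 be an integer and μ a nonzero complex number. Let p ∈ ℂ^{k−2} be a nonzero solution of the system μ x_i^{k−1} = ∏_{j ∈ {1,…,k−2}, j ≠ i} x_j (i = 1, …, k−2). Then the (k−2)×(k−2) Jacobian matrix J of this system at p, given by J_{ii} = (k−1) μ p_i^{k−2} and J_{ij} = −∏_{l ∈ {1,…,k−2}, l ≠ i, l ≠ j} p_l for i ≠ j, is invertible. -/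
/-!
A zero coordinate of a solution forces every other coordinate to vanish, so at a nonzero
solution `p` all coordinates are nonzero. Substituting the equations into the diagonal,
`J = diag(∏_{j ≠ i} p_j) · (k • 1 - 𝟙𝟙ᵀ) · diag(p⁻¹)`, and by the matrix determinant lemma
the middle factor has determinant `k ^ (m - 1) * (k - m)`, which is nonzero since `m = k - 2`.
-/

open Finset Matrix

section

variable {n K : Type*} [Fintype n] [DecidableEq n] [Field K]

theorem isUnit_smul_one_sub_all_ones {c : K} (hc : c ≠ 0) (hcard : c ≠ Fintype.card n) :
    IsUnit (c • (1 : Matrix n n K) - of fun _ _ => 1) := by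
  have hfactor : c • (1 : Matrix n n K) - of (fun _ _ => 1) =
      c • ((1 : Matrix n n K) +
        replicateCol Unit (fun _ : n => -c⁻¹) * replicateRow Unit (fun _ : n => (1 : K))) := by
    ext i j
    simp only [Matrix.sub_apply, Matrix.smul_apply, Matrix.add_apply, one_apply, of_apply,
      ← vecMulVec_eq, vecMulVec_apply, smul_eq_mul]
    split_ifs <;> field_simp <;> ring
  rw [hfactor, isUnit_iff_isUnit_det, det_smul, det_one_add_replicateCol_mul_replicateRow,
    isUnit_iff_ne_zero]
  have hdet : (1 : K) + (fun _ : n => (1 : K)) ⬝ᵥ (fun _ => -c⁻¹) = (c - Fintype.card n) / c := by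
    simp only [dotProduct, one_mul, sum_const, card_univ, nsmul_eq_mul]
    field_simp
    ring
  rw [hdet]
  exact mul_ne_zero (pow_ne_zero _ hc) (div_ne_zero (sub_ne_zero.mpr hcard) hc)

namespace ProdEraseSystem

/-- The Jacobian of `x ↦ (μ * x i ^ (e + 1) - ∏ j ≠ i, x j)_i` at `p`. -/
def jacobian (μ : K) (e : ℕ) (p : n → K) : Matrix n n K :=
  of fun i j => if i = j then (e + 1 : K) * μ * p i ^ e else -∏ l ∈ (univ.erase i).erase j, p l

variable {μ : K} {e : ℕ} {p : n → K}

theorem ne_zero_of_solution (hμ : μ ≠ 0) (hp : p ≠ 0)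
    (hsol : ∀ i, μ * p i ^ (e + 1) = ∏ j ∈ univ.erase i, p j) (i : n) : p i ≠ 0 := by
  intro hi
  refine hp (funext fun j => ?_)
  rcases eq_or_ne j i with rfl | hji
  · exact hi
  · have : μ * p j ^ (e + 1) = 0 := by
      rw [hsol j]
      exact prod_eq_zero (mem_erase.mpr ⟨hji.symm, mem_univ i⟩) hi
    simpa [hμ] using this

theorem jacobian_eq_diagonal_mul_mul_diagonal (hp : ∀ i, p i ≠ 0)
    (hsol : ∀ i, μ * p i ^ (e + 1) = ∏ j ∈ univ.erase i, p j) :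
    jacobian μ e p = diagonal (fun i => ∏ j ∈ univ.erase i, p j) *
      ((e + 2 : K) • 1 - of fun _ _ => 1) * diagonal p⁻¹ := by
  ext i j
  rw [mul_diagonal, diagonal_mul, jacobian, of_apply]
  rcases eq_or_ne i j with rfl | hij
  · rw [← hsol i]
    simp only [if_pos, Matrix.sub_apply, Matrix.smul_apply, one_apply_eq, smul_eq_mul, of_apply,
      Pi.inv_apply]
    field_simp [hp i]
    ring
  · rw [← mul_prod_erase (univ.erase i) p (mem_erase.mpr ⟨hij.symm, mem_univ j⟩)]
    simp only [if_neg hij, Matrix.sub_apply, Matrix.smul_apply, one_apply_ne hij, smul_eq_mul,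
      of_apply, Pi.inv_apply]
    field_simp [hp j]
    ring

theorem isUnit_jacobian (hμ : μ ≠ 0) (hp : p ≠ 0)
    (hsol : ∀ i, μ * p i ^ (e + 1) = ∏ j ∈ univ.erase i, p j)
    (hc : (e + 2 : K) ≠ 0) (hcard : (e + 2 : K) ≠ Fintype.card n) :
    IsUnit (jacobian μ e p) := by
  have hp0 := ne_zero_of_solution hμ hp hsol
  rw [jacobian_eq_diagonal_mul_mul_diagonal hp0 hsol]
  refine .mul (.mul ?_ (isUnit_smul_one_sub_all_ones hc hcard)) ?_ <;>
    refine isUnit_diagonal.mpr (Pi.isUnit_iff.mpr fun i => isUnit_iff_ne_zero.mpr ?_)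
  · exact prod_ne_zero_iff.mpr fun j _ => hp0 j
  · exact inv_ne_zero (hp0 i)

end ProdEraseSystem

end

theorem jacobian_invertible_at_nonzero_solution_general
    (k : ℕ) (μ : ℂ) (hμ : μ ≠ 0) (p : Fin (k - 2) → ℂ) (hp : p ≠ 0)
    (hsol : ∀ i, μ * p i ^ (k - 1) = ∏ j ∈ Finset.univ.erase i, p j) :
    IsUnit (Matrix.of fun i j : Fin (k - 2) =>
      if i = j then (k - 1 : ℂ) * μ * p i ^ (k - 2)
      else -∏ l ∈ (Finset.univ.erase i).erase j, p l) := by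
  obtain ⟨i, -⟩ := Function.ne_iff.mp hp
  have hk : 3 ≤ k := by have := i.is_lt; omega
  have hexp : k - 1 = k - 2 + 1 := by omega
  have hcast : ((k - 2 : ℕ) : ℂ) + 2 = k := by push_cast [Nat.cast_sub (by omega : 2 ≤ k)]; ring
  have hunit := ProdEraseSystem.isUnit_jacobian hμ hp (hexp ▸ hsol)
    (by rw [hcast]; exact_mod_cast (by omega : k ≠ 0)) (by simp [hcast]; omega)
  convert hunit using 1
  ext i j
  simp only [ProdEraseSystem.jacobian, of_apply]
  split_ifs <;> push_cast [Nat.cast_sub (by omega : 2 ≤ k)] <;> ring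

/-- The Jacobian matrix of the system `μ x_i^{k−1} = ∏_{j ≠ i} x_j`
(`i = 1, …, k−2`) at any nonzero solution `p` is invertible. -/
theorem jacobian_invertible_at_nonzero_solution
    (k : ℕ) (hk : 3 ≤ k) (μ : ℂ) (hμ : μ ≠ 0) (p : Fin (k - 2) → ℂ) (hp : p ≠ 0)
    (hsol : ∀ i, μ * p i ^ (k - 1) = ∏ j ∈ Finset.univ.erase i, p j) :
    IsUnit (Matrix.of fun i j : Fin (k - 2) =>
      if i = j then (k - 1 : ℂ) * μ * p i ^ (k - 2)
      else -∏ l ∈ (Finset.univ.erase i).erase j, p l) :=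
  jacobian_invertible_at_nonzero_solution_general k μ hμ p hp hsol
end

section
/- Let k ≥ 3 be an integer and μ a nonzero complex number. Consider the system of k−1 polynomial equations μ x_i^{k−1} = ∏_{j ∈ {1,…,k−1}, j ≠ i} x_j for i = 1, …, k−1, in x ∈ ℂ^{k−1}. Then the set of nonzero solutions x ∈ ℂ^{k−1} of this system has exactly k^{k−2} elements. -/
/-!
A nonzero solution has no vanishing coordinate (one zero coordinate kills every right-hand side
but its own), so multiplying the `i`-th equation by `x i` turns the system into
`μ * x i ^ k = ∏ j, x j` for all `i`. Hence all `x i ^ k` agree, i.e. `x = t • ω` with `ω` a tuple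
of `k`-th roots of unity normalised by `ω i₀ = 1`, and comparing products forces
`t = (∏ j, ω j) / μ`. The nonzero solutions therefore correspond bijectively to such normalised
tuples, of which there are `k ^ (k - 2)`.
-/

open Finset

section PowerProdSystem

variable {K ι : Type*} [Field K]

def rootTuples (i₀ : ι) (n : ℕ) : Set (ι → K) :=
  {ω | ω i₀ = 1 ∧ ∀ i, ω i ^ n = 1}

theorem apply_ne_zero_of_mem_rootTuples {i₀ : ι} {n : ℕ} {ω : ι → K}
    (hω : ω ∈ rootTuples i₀ (n + 1)) (i : ι) : ω i ≠ 0 :=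
  ne_zero_pow n.succ_ne_zero (by rw [hω.2 i]; exact one_ne_zero)

variable [Fintype ι] [DecidableEq ι]

def powerProdSolutions (μ : K) : Set (ι → K) :=
  {x | x ≠ 0 ∧ ∀ i, μ * x i ^ Fintype.card ι = ∏ j ∈ univ.erase i, x j}

theorem apply_ne_zero_of_mem_powerProdSolutions {μ : K} (hμ : μ ≠ 0) {x : ι → K}
    (hx : x ∈ powerProdSolutions μ) (i : ι) : x i ≠ 0 := by
  intro hxi
  obtain ⟨l, hl⟩ := Function.ne_iff.1 hx.1
  have hil : i ≠ l := by rintro rfl; exact hl hxi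
  have h := hx.2 l
  rw [prod_eq_zero (mem_erase.2 ⟨hil, mem_univ i⟩) hxi, mul_eq_zero] at h
  exact pow_ne_zero _ hl (h.resolve_left hμ)

theorem mem_powerProdSolutions_iff [Nonempty ι] {μ : K} (hμ : μ ≠ 0) {x : ι → K} :
    x ∈ powerProdSolutions μ ↔
      (∀ i, x i ≠ 0) ∧ ∀ i, μ * x i ^ (Fintype.card ι + 1) = ∏ j, x j := by
  have key : ∀ i, μ * x i ^ (Fintype.card ι + 1) = x i * (μ * x i ^ Fintype.card ι) :=
    fun i => by ring
  constructor
  · intro hx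
    refine ⟨apply_ne_zero_of_mem_powerProdSolutions hμ hx, fun i => ?_⟩
    rw [key, hx.2 i, mul_prod_erase univ x (mem_univ i)]
  · rintro ⟨hne, hprod⟩
    refine ⟨fun h => hne (Classical.arbitrary ι) (congrFun h _), fun i => ?_⟩
    apply mul_left_cancel₀ (hne i)
    rw [← key, hprod i, mul_prod_erase univ x (mem_univ i)]

theorem rootTuples_eq_piFinset (i₀ : ι) {n : ℕ} (hn : 0 < n) :
    (rootTuples i₀ n : Set (ι → K)) =
      Fintype.piFinset
        (Function.update (fun _ => Polynomial.nthRootsFinset n (1 : K)) i₀ {1}) := by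
  ext ω
  simp only [rootTuples, Set.mem_ofPred_eq, mem_coe, Fintype.mem_piFinset]
  constructor
  · rintro ⟨h₀, hroot⟩ i
    rcases eq_or_ne i i₀ with rfl | hi
    · simpa using h₀
    · simpa [hi, Polynomial.mem_nthRootsFinset hn] using hroot i
  · intro h
    have h₀ : ω i₀ = 1 := by simpa using h i₀
    refine ⟨h₀, fun i => ?_⟩
    rcases eq_or_ne i i₀ with rfl | hi
    · rw [h₀, one_pow]
    · simpa [hi, Polynomial.mem_nthRootsFinset hn] using h i

theorem ncard_rootTuples (i₀ : ι) {n : ℕ} (hn : 0 < n) :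
    (rootTuples i₀ n : Set (ι → K)).ncard =
      #(Polynomial.nthRootsFinset n (1 : K)) ^ (Fintype.card ι - 1) := by
  rw [rootTuples_eq_piFinset i₀ hn, Set.ncard_coe_finset, Fintype.card_piFinset,
    ← mul_prod_erase univ _ (mem_univ i₀), Function.update_self, card_singleton, one_mul,
    prod_congr rfl fun j hj => by rw [Function.update_of_ne (ne_of_mem_erase hj)], prod_const,
    card_erase_of_mem (mem_univ i₀), card_univ]

theorem mapsTo_rootTuples_powerProdSolutions [Nonempty ι] {μ : K} (hμ : μ ≠ 0) (i₀ : ι) :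
    Set.MapsTo (fun ω : ι → K => ((∏ j, ω j) / μ) • ω)
      (rootTuples i₀ (Fintype.card ι + 1)) (powerProdSolutions μ) := by
  intro ω hω
  have hne := apply_ne_zero_of_mem_rootTuples hω
  obtain ⟨t, ht⟩ : ∃ t, (∏ j, ω j) / μ = t := ⟨_, rfl⟩
  have htω : ∏ j, ω j = μ * t := by rw [← ht, mul_div_cancel₀ _ hμ]
  have htne : t ≠ 0 := ht ▸ div_ne_zero (prod_ne_zero_iff.2 fun i _ => hne i) hμ
  show ((∏ j, ω j) / μ) • ω ∈ _
  rw [ht, mem_powerProdSolutions_iff hμ]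
  refine ⟨fun i => mul_ne_zero htne (hne i), fun i => ?_⟩
  simp only [Pi.smul_apply, smul_eq_mul]
  rw [prod_mul_distrib, prod_const, card_univ, htω, mul_pow, hω.2 i]
  ring

theorem mapsTo_powerProdSolutions_rootTuples [Nonempty ι] {μ : K} (hμ : μ ≠ 0) (i₀ : ι) :
    Set.MapsTo (fun x : ι → K => (x i₀)⁻¹ • x)
      (powerProdSolutions μ) (rootTuples i₀ (Fintype.card ι + 1)) := by
  intro x hx
  obtain ⟨hne, hprod⟩ := (mem_powerProdSolutions_iff hμ).1 hx
  refine ⟨inv_mul_cancel₀ (hne i₀), fun i => ?_⟩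
  have hpow : x i ^ (Fintype.card ι + 1) = x i₀ ^ (Fintype.card ι + 1) :=
    mul_left_cancel₀ hμ ((hprod i).trans (hprod i₀).symm)
  simp only [Pi.smul_apply, smul_eq_mul]
  rw [mul_pow, hpow, inv_pow, inv_mul_cancel₀ (pow_ne_zero _ (hne i₀))]

theorem invOn_rootTuples_powerProdSolutions [Nonempty ι] {μ : K} (hμ : μ ≠ 0) (i₀ : ι) :
    Set.InvOn (fun x : ι → K => (x i₀)⁻¹ • x) (fun ω : ι → K => ((∏ j, ω j) / μ) • ω)
      (rootTuples i₀ (Fintype.card ι + 1)) (powerProdSolutions μ) := by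
  constructor
  · intro ω hω
    have ht : (∏ j, ω j) / μ ≠ 0 :=
      div_ne_zero (prod_ne_zero_iff.2 fun i _ => apply_ne_zero_of_mem_rootTuples hω i) hμ
    simp only [Pi.smul_apply, hω.1, smul_eq_mul, mul_one, smul_smul, inv_mul_cancel₀ ht, one_smul]
  · intro x hx
    obtain ⟨hne, hprod⟩ := (mem_powerProdSolutions_iff hμ).1 hx
    have hscale : (∏ j, (x i₀)⁻¹ * x j) / μ = x i₀ := by
      rw [prod_mul_distrib, prod_const, card_univ, ← hprod i₀]
      rw [mul_div_assoc, mul_div_cancel_left₀ _ hμ, pow_succ, inv_pow,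
        inv_mul_cancel_left₀ (pow_ne_zero _ (hne i₀))]
    simp only [Pi.smul_apply, smul_eq_mul, hscale, smul_smul, mul_inv_cancel₀ (hne i₀), one_smul]

theorem bijOn_rootTuples_powerProdSolutions [Nonempty ι] {μ : K} (hμ : μ ≠ 0) (i₀ : ι) :
    Set.BijOn (fun ω : ι → K => ((∏ j, ω j) / μ) • ω)
      (rootTuples i₀ (Fintype.card ι + 1)) (powerProdSolutions μ) :=
  (invOn_rootTuples_powerProdSolutions hμ i₀).bijOn (mapsTo_rootTuples_powerProdSolutions hμ i₀)
    (mapsTo_powerProdSolutions_rootTuples hμ i₀)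

theorem ncard_powerProdSolutions [Nonempty ι] {μ : K} (hμ : μ ≠ 0) {ζ : K}
    (hζ : IsPrimitiveRoot ζ (Fintype.card ι + 1)) :
    (powerProdSolutions μ : Set (ι → K)).ncard =
      (Fintype.card ι + 1) ^ (Fintype.card ι - 1) := by
  obtain ⟨i₀⟩ := ‹Nonempty ι›
  rw [← (bijOn_rootTuples_powerProdSolutions hμ i₀).ncard_eq,
    ncard_rootTuples i₀ (Nat.succ_pos _), hζ.card_nthRootsFinset]

end PowerProdSystem

/-- For `k ≥ 3` and `μ ≠ 0`, the system
`μ x_i^{k−1} = ∏_{j ≠ i} x_j` (`i = 1, …, k−1`) has exactly `k^{k−2}` nonzero solutions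
in `ℂ^{k−1}`. -/
theorem card_nonzero_solutions_km1
    (k : ℕ) (hk : 3 ≤ k) (μ : ℂ) (hμ : μ ≠ 0) :
    {x : Fin (k - 1) → ℂ | x ≠ 0 ∧
        ∀ i, μ * x i ^ (k - 1) = ∏ j ∈ Finset.univ.erase i, x j}.ncard
      = k ^ (k - 2) := by
  have : Nonempty (Fin (k - 1)) := ⟨⟨0, by omega⟩⟩
  have h := ncard_powerProdSolutions (ι := Fin (k - 1)) hμ
    (Complex.isPrimitiveRoot_exp _ (Nat.succ_ne_zero _))
  rwa [powerProdSolutions, Fintype.card_fin, Nat.sub_add_cancel (by omega : 1 ≤ k),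
    Nat.sub_sub] at h
end

section
/- Let G be a connected finite simple graph with edge set E and let d be a positive integer. Then the number P_d(G) of parity-closed walks of length d in G equals 2^{−|E|} Σ_π trace(A(G_π)^d), where the sum is over all 2^{|E|} sign functions π on G. -/
open Matrix Finset
open scoped Classical

/-- The number of parity-closed walks of length `d` in `G`: closed walks (with a starting
vertex) using every edge an even number of times. -/
noncomputable def parityClosedWalkCount {V : Type*} [Fintype V] [DecidableEq V]
    (G : SimpleGraph V) (d : ℕ) : ℕ :=
  Nat.card {p : Σ v : V, G.Walk v v //
    p.2.length = d ∧ ∀ e : Sym2 V, Even (p.2.edges.count e)}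

/-! Expanding `(A(G_π) ^ d) v v` along closed walks, a walk contributes `∏ₑ π(e) ^ mₑ`, where
`mₑ` is the number of times it uses `e`. The signs `π(e)` are independent, and summing
`s ^ m` over `s = ±1` gives `2` for even `m` and `0` for odd `m`; so summing over all `π`, a walk
contributes `2 ^ |E|` if it is parity-closed and `0` otherwise. -/

theorem List.prod_map_eq_prod_pow_count {α M : Type*} [DecidableEq α] [CommMonoid M]
    {l : List α} {s : Set α} [Fintype s] (hl : ∀ x ∈ l, x ∈ s) (f : α → M) :
    (l.map f).prod = ∏ x : s, f x ^ l.count (x : α) := by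
  rw [Finset.prod_list_map_count, Finset.prod_set_coe (f := fun x => f x ^ l.count x)]
  refine Finset.prod_subset (fun x hx => ?_) fun x _ hx => ?_
  · exact Set.mem_toFinset.mpr (hl x (List.mem_toFinset.mp hx))
  · rw [List.count_eq_zero_of_not_mem (mt List.mem_toFinset.mpr hx), pow_zero]

theorem sum_unitsInt_pow {R : Type*} [Ring R] (c : ℕ) :
    ∑ s : ℤˣ, ((s : ℤ) : R) ^ c = if Even c then 2 else 0 := by
  rw [UnitsInt.univ, Finset.sum_pair (by decide)]
  rcases Nat.even_or_odd c with hc | hc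
  · simp [hc.neg_one_pow, one_add_one_eq_two, hc]
  · simp [hc.neg_one_pow, Nat.not_even_iff_odd.mpr hc]

theorem sum_signs_prod_pow {ι R : Type*} [Fintype ι] [DecidableEq ι] [CommRing R] (c : ι → ℕ) :
    ∑ π : ι → ℤˣ, ∏ i, ((π i : ℤ) : R) ^ c i =
      if ∀ i, Even (c i) then 2 ^ Fintype.card ι else 0 := by
  rw [← Fintype.prod_sum (fun i (s : ℤˣ) => ((s : ℤ) : R) ^ c i)]
  simp only [sum_unitsInt_pow]
  rw [Fintype.prod_ite_zero, Finset.prod_const, Finset.card_univ]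

namespace SimpleGraph

variable {V : Type*} [Fintype V] [DecidableEq V] (G : SimpleGraph V) [DecidableRel G.Adj]

theorem sum_finsetWalkLength_succ {M : Type*} [AddCommMonoid M] (n : ℕ) (u v : V)
    (f : G.Walk u v → M) :
    ∑ p ∈ G.finsetWalkLength (n + 1) u v, f p =
      ∑ w, if h : G.Adj u w then ∑ p ∈ G.finsetWalkLength n w v, f (.cons h p) else 0 := by
  rw [finsetWalkLength, Finset.sum_biUnion]
  · rw [Finset.sum_dite, Finset.sum_const_zero, add_zero]
    exact Fintype.sum_equiv (Equiv.subtypeEquivRight (by simp)) _ _ fun _ => Finset.sum_map ..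
  · rintro ⟨x, _⟩ - ⟨y, _⟩ - hxy
    refine Finset.disjoint_left.mpr ?_
    simp only [Finset.mem_map]
    rintro _ ⟨_, _, rfl⟩ ⟨_, _, h⟩
    cases h
    exact hxy rfl

theorem matrix_pow_apply_eq_sum_walk {R : Type*} [Semiring R] (A : Matrix V V R)
    (hA : ∀ i j, ¬G.Adj i j → A i j = 0) (n : ℕ) (u v : V) :
    (A ^ n) u v = ∑ p ∈ G.finsetWalkLength n u v, (p.darts.map fun d => A d.fst d.snd).prod := by
  induction n generalizing u with
  | zero =>
    obtain rfl | huv := eq_or_ne u v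
    · simp [finsetWalkLength]
    · simp [finsetWalkLength, huv]
  | succ n ih =>
    rw [sum_finsetWalkLength_succ, pow_succ', Matrix.mul_apply]
    refine Finset.sum_congr rfl fun w _ => ?_
    by_cases h : G.Adj u w
    · simp [h, ih, Finset.mul_sum]
    · rw [dif_neg h, hA u w h, zero_mul]

theorem signedAdj_pow_apply (π : G.edgeSet → ℤˣ) (n : ℕ) (u v : V) :
    (signedAdj G π ^ n) u v =
      ∑ p ∈ G.finsetWalkLength n u v,
        ∏ e : G.edgeSet, ((π e : ℤ) : ℝ) ^ p.edges.count (e : Sym2 V) := by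
  rw [matrix_pow_apply_eq_sum_walk G _ (fun i j h => by simp [signedAdj, h])]
  refine Finset.sum_congr rfl fun p _ => ?_
  have hmap : p.darts.map (fun d => signedAdj G π d.fst d.snd) =
      p.edges.map fun e => if h : e ∈ G.edgeSet then ((π ⟨e, h⟩ : ℤ) : ℝ) else 0 := by
    simp only [Walk.edges, List.map_map]
    refine List.map_congr_left fun d _ => ?_
    simp [signedAdj, Dart.edge]
  rw [hmap, List.prod_map_eq_prod_pow_count p.edges_subset_edgeSet]
  exact Finset.prod_congr rfl fun e _ => by rw [dif_pos e.2]

theorem sum_signs_prod_pow_count_edges {u v : V} (p : G.Walk u v) :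
    ∑ π : G.edgeSet → ℤˣ, ∏ e : G.edgeSet, ((π e : ℤ) : ℝ) ^ p.edges.count (e : Sym2 V) =
      if ∀ e : Sym2 V, Even (p.edges.count e) then 2 ^ G.edgeSet.ncard else 0 := by
  have hoff : ∀ e ∉ G.edgeSet, p.edges.count e = 0 :=
    fun e he => List.count_eq_zero_of_not_mem (mt (p.edges_subset_edgeSet ·) he)
  rw [sum_signs_prod_pow, ← Nat.card_eq_fintype_card, Nat.card_coe_set_eq]
  congr 1
  exact propext ⟨fun h e => if he : e ∈ G.edgeSet then h ⟨e, he⟩ else by simp [hoff e he],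
    fun h e => h e⟩

theorem parityClosedWalkCount_eq_sum_card (d : ℕ) :
    parityClosedWalkCount G d =
      ∑ v, #{p ∈ G.finsetWalkLength d v v | ∀ e : Sym2 V, Even (p.edges.count e)} := by
  have hequiv : {p : Σ v : V, G.Walk v v // p.2.length = d ∧ ∀ e : Sym2 V, Even (p.2.edges.count e)}
      ≃ (Finset.univ.sigma fun v =>
          {p ∈ G.finsetWalkLength d v v | ∀ e : Sym2 V, Even (p.edges.count e)}) :=
    Equiv.subtypeEquivRight fun p => by simp [mem_finsetWalkLength_iff]
  rw [parityClosedWalkCount, Nat.card_congr hequiv, Nat.card_eq_fintype_card, Fintype.card_coe,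
    Finset.card_sigma]

end SimpleGraph

theorem parityClosedWalkCount_eq_avg_trace_general
    {V : Type*} [Fintype V] [DecidableEq V] (G : SimpleGraph V)
    (d : ℕ) :
    (parityClosedWalkCount G d : ℝ) =
      (∑ π : G.edgeSet → ℤˣ, ((signedAdj G π) ^ d).trace) / 2 ^ G.edgeSet.ncard := by
  rw [eq_div_iff (by positivity)]
  calc (parityClosedWalkCount G d : ℝ) * 2 ^ G.edgeSet.ncard
      = ∑ v, ∑ p ∈ G.finsetWalkLength d v v,
          if ∀ e : Sym2 V, Even (p.edges.count e) then (2 : ℝ) ^ G.edgeSet.ncard else 0 := by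
        simp [G.parityClosedWalkCount_eq_sum_card, Finset.sum_mul, Finset.sum_ite]
    _ = ∑ v, ∑ p ∈ G.finsetWalkLength d v v, ∑ π : G.edgeSet → ℤˣ,
          ∏ e : G.edgeSet, ((π e : ℤ) : ℝ) ^ p.edges.count (e : Sym2 V) := by
        simp only [SimpleGraph.sum_signs_prod_pow_count_edges]
    _ = ∑ π : G.edgeSet → ℤˣ, ((signedAdj G π) ^ d).trace := by
        simp only [Matrix.trace, Matrix.diag, SimpleGraph.signedAdj_pow_apply]
        rw [Finset.sum_comm]
        exact Finset.sum_congr rfl fun v _ => Finset.sum_comm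

/-- For a connected graph `G`,
`P_d(G) = 2^{−|E|} Σ_π tr(A(G_π)^d)`, the sum over all sign functions on `G`. -/
theorem parityClosedWalkCount_eq_avg_trace
    {V : Type*} [Fintype V] [DecidableEq V] (G : SimpleGraph V)
    (hG : G.Connected) (d : ℕ) (hd : 0 < d) :
    (parityClosedWalkCount G d : ℝ) =
      (∑ π : G.edgeSet → ℤˣ, ((signedAdj G π) ^ d).trace) / 2 ^ G.edgeSet.ncard :=
  parityClosedWalkCount_eq_avg_trace_general G d
end
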